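/- arXiv:0901.1679 — 4 statements merged into one kernel-verified Lean document; each statement's English description precedes it below -/
import Mathlib

section
/- Let r ≥ 1, let a_1 < a_2 < ⋯ < a_r be positive integers, and set m = Σ_{i=1}^r (a_i − i). For integers i ≥ 1 and k ≥ 0 let B_{i,k}(X) = (1/k!)·∏_{j=0}^{k−1} (X + i − 1 − j) ∈ ℚ[X] (the polynomial binomial coefficient 'X+i−1 choose k'). Then the polynomial m! · Σ_σ sgn(σ) ∏_{i=1}^r B_{i, a_i−σ(i)}(X) ∈ ℚ[X], where the sum runs over all permutations σ of {1,…,r} with σ(i) ≤ a_i for all i, has integer coefficients and degree at most m. -/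
/-!
Clearing the denominator of each factor gives `k! • B_{i,k} = ∏_{j<k} (X + i - 1 - j) ∈ ℤ[X]`,
so `m! • ∏ᵢ B_{i,kᵢ} = (m! / ∏ᵢ kᵢ!) • ∏ᵢ (kᵢ! • B_{i,kᵢ})` has integer coefficients as soon as
`∏ᵢ kᵢ! ∣ m!`, which holds because `∏ᵢ kᵢ! ∣ (∑ᵢ kᵢ)!` (multinomial coefficients) and
`∑ᵢ (aᵢ - σ(i)) ≤ m` for every admissible `σ`. The same bound `∑ᵢ kᵢ ≤ m` gives the degree.
-/

open Finset

/-- The polynomial binomial coefficient `B_{i,k}(X) = (1/k!) ∏_{j=0}^{k-1} (X + i - 1 - j)`,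
i.e. "X + i - 1 choose k" as a polynomial in X over ℚ. -/
noncomputable def Bpoly (i k : ℕ) : Polynomial ℚ :=
  ((k.factorial : ℚ)⁻¹) • ∏ j ∈ Finset.range k,
    (Polynomial.X + Polynomial.C ((i : ℚ) - 1 - (j : ℚ)))

open Polynomial Nat

theorem Finset.sum_tsub_comp_perm_le {ι : Type*} [Fintype ι] (σ : Equiv.Perm ι) (a b : ι → ℕ)
    (h : ∀ i, b (σ i) ≤ a i) : ∑ i, (a i - b (σ i)) ≤ ∑ i, (a i - b i) := by
  have hσ : ∑ i, (a i - b (σ i)) + ∑ i, b i = ∑ i, a i := by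
    rw [← Equiv.sum_comp σ b, ← sum_add_distrib]
    exact sum_congr rfl fun i _ => Nat.sub_add_cancel (h i)
  have hle : ∑ i, a i ≤ ∑ i, (a i - b i) + ∑ i, b i := by
    rw [← sum_add_distrib]
    exact sum_le_sum fun i _ => le_tsub_add
  omega

theorem Bpoly_degree_le (i k : ℕ) : (Bpoly i k).degree ≤ k := by
  refine (degree_smul_le _ _).trans <| (degree_prod_le _ _).trans ?_
  refine (sum_le_sum fun j _ => (degree_X_add_C _).le).trans ?_
  simp

theorem degree_prod_Bpoly_le {ι : Type*} (s : Finset ι) (c k : ι → ℕ) :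
    (∏ i ∈ s, Bpoly (c i) (k i)).degree ≤ ∑ i ∈ s, k i := by
  refine (degree_prod_le _ _).trans ?_
  rw [Nat.cast_sum]
  exact sum_le_sum fun i _ => Bpoly_degree_le _ _

theorem factorial_smul_Bpoly (i k : ℕ) :
    (k ! : ℚ) • Bpoly i k = ∏ j ∈ range k, (X + C ((i : ℚ) - 1 - j)) := by
  rw [Bpoly, smul_smul, mul_inv_cancel₀ (by positivity), one_smul]

theorem factorial_smul_Bpoly_mem_lifts (i k : ℕ) :
    (k ! : ℚ) • Bpoly i k ∈ lifts (Int.castRingHom ℚ) := by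
  rw [factorial_smul_Bpoly]
  refine prod_mem fun j _ => add_mem (X_mem_lifts _) ?_
  simpa using C_mem_lifts (Int.castRingHom ℚ) ((i : ℤ) - 1 - j)

theorem factorial_smul_prod_Bpoly_mem_lifts {ι : Type*} (s : Finset ι) (c k : ι → ℕ) {m : ℕ}
    (hm : ∑ i ∈ s, k i ≤ m) :
    (m ! : ℚ) • ∏ i ∈ s, Bpoly (c i) (k i) ∈ lifts (Int.castRingHom ℚ) := by
  obtain ⟨d, hd⟩ : ∏ i ∈ s, (k i)! ∣ m ! :=
    (prod_factorial_dvd_factorial_sum s k).trans (factorial_dvd_factorial hm)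
  have hsplit : (m ! : ℚ) • ∏ i ∈ s, Bpoly (c i) (k i)
      = d • ∏ i ∈ s, ((k i)! : ℚ) • Bpoly (c i) (k i) := by
    rw [prod_smul, ← Nat.cast_smul_eq_nsmul ℚ, smul_smul, hd, Nat.cast_mul, Nat.cast_prod, mul_comm]
  rw [hsplit]
  exact nsmul_mem (prod_mem fun i _ => factorial_smul_Bpoly_mem_lifts _ _) _

theorem stmt1_general (r : ℕ) (a : Fin r → ℕ) :
    let m : ℕ := ∑ i : Fin r, (a i - (i.1 + 1))
    let Q : Polynomial ℚ :=
      (m.factorial : ℚ) •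
        ∑ σ ∈ Finset.univ.filter
            (fun σ : Equiv.Perm (Fin r) => ∀ i : Fin r, (σ i).1 + 1 ≤ a i),
          ((Equiv.Perm.sign σ : ℤ) : ℚ) •
            ∏ i : Fin r, Bpoly (i.1 + 1) (a i - ((σ i).1 + 1))
    (∀ n : ℕ, ∃ z : ℤ, Q.coeff n = (z : ℚ)) ∧ Q.degree ≤ (m : ℕ) := by
  intro m Q
  have hk : ∀ σ ∈ univ.filter fun σ : Equiv.Perm (Fin r) => ∀ i, (σ i).1 + 1 ≤ a i,
      ∑ i, (a i - ((σ i).1 + 1)) ≤ m := fun σ hσ =>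
    sum_tsub_comp_perm_le σ a (fun i => i.1 + 1) (mem_filter.mp hσ).2
  constructor
  · have hQ : Q ∈ lifts (Int.castRingHom ℚ) := by
      rw [show Q = _ from smul_sum]
      refine sum_mem fun σ hσ => ?_
      rw [smul_comm, smul_eq_C_mul]
      exact mul_mem (by simpa using C_mem_lifts (Int.castRingHom ℚ) (Equiv.Perm.sign σ : ℤ))
        (factorial_smul_prod_Bpoly_mem_lifts _ _ _ (hk σ hσ))
    exact fun n => ((lifts_iff_coeff_lifts Q).mp hQ n).imp fun z hz => hz.symm
  · refine (degree_smul_le _ _).trans <| (degree_sum_le _ _).trans <| Finset.sup_le fun σ hσ => ?_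
    refine (degree_smul_le _ _).trans <| (degree_prod_Bpoly_le _ _ _).trans ?_
    exact_mod_cast hk σ hσ

/-- with m = Σ (aᵢ − i), the polynomial
m! · Σ_σ sgn(σ) ∏ᵢ B_{i, aᵢ−σ(i)}(X)  (sum over permutations σ with σ(i) ≤ aᵢ)
has integer coefficients and degree at most m.  Here `i : Fin r` stands for the
1-based index `i.1 + 1`. -/
theorem stmt1 (r : ℕ) (hr : 1 ≤ r) (a : Fin r → ℕ) (ha : StrictMono a)
    (ha1 : 0 < a ⟨0, hr⟩) :
    let m : ℕ := ∑ i : Fin r, (a i - (i.1 + 1))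
    let Q : Polynomial ℚ :=
      (m.factorial : ℚ) •
        ∑ σ ∈ Finset.univ.filter
            (fun σ : Equiv.Perm (Fin r) => ∀ i : Fin r, (σ i).1 + 1 ≤ a i),
          ((Equiv.Perm.sign σ : ℤ) : ℚ) •
            ∏ i : Fin r, Bpoly (i.1 + 1) (a i - ((σ i).1 + 1))
    (∀ n : ℕ, ∃ z : ℤ, Q.coeff n = (z : ℚ)) ∧ Q.degree ≤ (m : ℕ) :=
  stmt1_general r a
end

section
/- Let K be a field, let τ ∈ K, let r ≥ 1, and let u_1,…,u_r ∈ K be pairwise distinct elements such that u_i + u_j + τ ≠ 0 for all i ≠ j. Then Σ_{j=1}^r [ ∏_{i=1}^r (1 − u_j u_i) · ∏_{i≠j} (1 + τu_i + u_i u_j) ] / [ ∏_{i≠j} (u_j + u_i + τ)(u_j − u_i) ] = (−1)^{r−1} ( 1 − ∏_{i=1}^r u_i^2 ). -/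
/-!
Put `tᵢ = 1 + τuᵢ + uᵢ²` and `bᵢ = uᵢ²`. Then `tⱼ - tᵢ = (uⱼ + uᵢ + τ)(uⱼ - uᵢ)` and
`(1 - uⱼuᵢ)(1 + τuᵢ + uᵢuⱼ) = tᵢ - bᵢtⱼ`, so the hypotheses say exactly that the `tᵢ` are distinct
and the identity becomes `∑ⱼ (1 - bⱼ) ∏_{i≠j} (tᵢ - bᵢtⱼ) / ∏_{i≠j} (tⱼ - tᵢ) = (-1)^(r-1) (1 - ∏ bᵢ)`,
now for arbitrary `b`. With `G(x) = ∏ᵢ (tᵢ - bᵢx)`, the `j`-th numerator is `(G(x) - G(0)) / x`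
evaluated at `tⱼ`, plus `∏_{i≠j} tᵢ`. Lagrange interpolation at the nodes `tᵢ` turns the first part
into the coefficient `(-1)^r ∏ bᵢ` of `x^r` in `G`, and the second into `(-1)^(r-1)` times the
interpolant of the constant `1` evaluated at `0`.
-/

open Finset Polynomial

section LinearFactors

variable {R : Type*} [CommRing R]

theorem natDegree_C_sub_C_mul_X_le (a b : R) : (C a - C b * X).natDegree ≤ 1 := by
  compute_degree

theorem divX_C_sub_C_mul_X_mul (a b : R) (p : R[X]) :
    divX ((C a - C b * X) * p) = C a * divX p - C b * p := by
  ext n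
  simp [sub_mul, mul_assoc, coeff_X_mul]

theorem eval_divX_C_sub_C_mul_X_mul (a b : R) (p : R[X]) :
    (divX ((C a - C b * X) * p)).eval a = (1 - b) * p.eval a - p.coeff 0 := by
  have h := congrArg (eval a) (divX_mul_X_add p)
  simp only [eval_add, eval_mul, eval_X, eval_C] at h
  rw [divX_C_sub_C_mul_X_mul]
  simp only [eval_sub, eval_mul, eval_C]
  linear_combination h

variable {ι : Type*} [Fintype ι] (t b : ι → R)

theorem natDegree_prod_C_sub_C_mul_X_le :
    (∏ i, (C (t i) - C (b i) * X)).natDegree ≤ Fintype.card ι :=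
  (natDegree_prod_le _ _).trans <|
    (sum_le_sum fun i _ => natDegree_C_sub_C_mul_X_le (t i) (b i)).trans_eq (by simp)

theorem coeff_card_prod_C_sub_C_mul_X :
    (∏ i, (C (t i) - C (b i) * X)).coeff (Fintype.card ι) = (-1) ^ Fintype.card ι * ∏ i, b i := by
  rw [← mul_one (Fintype.card ι), ← card_univ,
    coeff_prod_of_natDegree_le (h := fun i _ => natDegree_C_sub_C_mul_X_le _ _)]
  simp [prod_neg]

end LinearFactors

theorem Lagrange.sum_prod_sub_div_prod_sub {F ι : Type*} [Field F] [Fintype ι] [DecidableEq ι]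
    [Nonempty ι] {v : ι → F} (hv : Function.Injective v) (x : F) :
    ∑ j, (∏ i ∈ univ.erase j, (x - v i)) / ∏ i ∈ univ.erase j, (v j - v i) = 1 := by
  have h := congrArg (eval x) (Lagrange.sum_basis hv.injOn univ_nonempty)
  rw [eval_finsetSum, eval_one] at h
  rw [← h]
  refine sum_congr rfl fun j _ => ?_
  simp [Lagrange.basis, Lagrange.basisDivisor, eval_prod, prod_mul_distrib, div_eq_mul_inv,
    prod_inv_distrib, mul_comm]

theorem sum_one_sub_mul_prod_sub_mul_div_prod_sub {K ι : Type*} [Field K] [Fintype ι]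
    [DecidableEq ι] [Nonempty ι] (t b : ι → K) (ht : Function.Injective t) :
    ∑ j, (1 - b j) * (∏ i ∈ univ.erase j, (t i - b i * t j)) / ∏ i ∈ univ.erase j, (t j - t i) =
      (-1) ^ (Fintype.card ι - 1) * (1 - ∏ i, b i) := by
  set G : K[X] := ∏ i, (C (t i) - C (b i) * X) with hG
  have hn : 0 < Fintype.card ι := Fintype.card_pos
  have hvalue : ∀ j, (1 - b j) * ∏ i ∈ univ.erase j, (t i - b i * t j) =
      (divX G).eval (t j) + ∏ i ∈ univ.erase j, t i := by
    intro j
    rw [hG, ← mul_prod_erase univ _ (mem_univ j), eval_divX_C_sub_C_mul_X_mul,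
      coeff_zero_eq_eval_zero]
    simp [eval_prod]
  have hdeg : (divX G).degree < Fintype.card ι := by
    refine (degree_le_of_natDegree_le (n := Fintype.card ι - 1) ?_).trans_lt ?_
    · rw [natDegree_divX_eq_natDegree_tsub_one]
      exact Nat.sub_le_sub_right (natDegree_prod_C_sub_C_mul_X_le t b) 1
    · exact_mod_cast Nat.sub_lt hn one_pos
  have hcoeff : (divX G).coeff (Fintype.card ι - 1) = (-1) ^ Fintype.card ι * ∏ i, b i := by
    rw [coeff_divX, Nat.sub_add_cancel hn, coeff_card_prod_C_sub_C_mul_X]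
  have hconst : ∑ j, (∏ i ∈ univ.erase j, t i) / ∏ i ∈ univ.erase j, (t j - t i) =
      (-1) ^ (Fintype.card ι - 1) := by
    calc _ = ∑ j, (-1) ^ (Fintype.card ι - 1) *
          ((∏ i ∈ univ.erase j, (0 - t i)) / ∏ i ∈ univ.erase j, (t j - t i)) := by
          refine sum_congr rfl fun j _ => ?_
          simp only [zero_sub, prod_neg, card_erase_of_mem (mem_univ j), card_univ, ← mul_assoc,
            ← pow_add, Even.neg_one_pow ⟨_, rfl⟩, one_mul, mul_div_assoc]
      _ = _ := by rw [← mul_sum, Lagrange.sum_prod_sub_div_prod_sub ht 0, mul_one]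
  simp only [hvalue, add_div, sum_add_distrib, hconst,
    ← Lagrange.coeff_eq_sum ht.injOn (s := univ) (by rwa [card_univ]), card_univ, hcoeff]
  obtain ⟨m, hm⟩ := Nat.exists_eq_succ_of_ne_zero hn.ne'
  rw [hm, Nat.succ_sub_one, pow_succ]
  ring

/-- Zeilberger's identity: for pairwise distinct u₁,…,u_r in a field K with
uᵢ + uⱼ + τ ≠ 0 for i ≠ j,
Σⱼ [∏ᵢ (1 − uⱼuᵢ) · ∏_{i≠j} (1 + τuᵢ + uᵢuⱼ)] / [∏_{i≠j} (uⱼ+uᵢ+τ)(uⱼ−uᵢ)]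
= (−1)^(r−1) (1 − ∏ᵢ uᵢ²). -/
theorem stmt3 (K : Type*) [Field K] (τ : K) (r : ℕ) (hr : 1 ≤ r) (u : Fin r → K)
    (hinj : Function.Injective u)
    (hsum : ∀ i j : Fin r, i ≠ j → u i + u j + τ ≠ 0) :
    ∑ j : Fin r,
      ((∏ i : Fin r, (1 - u j * u i)) *
          ∏ i ∈ Finset.univ.erase j, (1 + τ * u i + u i * u j)) /
        ∏ i ∈ Finset.univ.erase j, ((u j + u i + τ) * (u j - u i)) =
    (-1 : K) ^ (r - 1) * (1 - ∏ i : Fin r, (u i) ^ 2) := by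
  have : Nonempty (Fin r) := Fin.pos_iff_nonempty.mp hr
  set t : Fin r → K := fun i => 1 + τ * u i + u i ^ 2
  have hdiff : ∀ i j, t j - t i = (u j + u i + τ) * (u j - u i) := fun i j => by ring
  have ht : Function.Injective t := by
    intro i j hij
    by_contra hne
    exact mul_ne_zero (hsum j i (Ne.symm hne)) (sub_ne_zero.mpr (hinj.ne (Ne.symm hne)))
      (by rw [← hdiff, hij, sub_self])
  have hnum : ∀ j, (∏ i, (1 - u j * u i)) * ∏ i ∈ univ.erase j, (1 + τ * u i + u i * u j) =
      (1 - u j ^ 2) * ∏ i ∈ univ.erase j, (t i - u i ^ 2 * t j) := by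
    intro j
    rw [← mul_prod_erase univ _ (mem_univ j), mul_assoc, ← prod_mul_distrib]
    congr 1
    · ring
    · exact prod_congr rfl fun i _ => by ring
  simp only [hnum, ← hdiff]
  simpa using sum_one_sub_mul_prod_sub_mul_div_prod_sub t (fun i => u i ^ 2) ht
end

section
/- For all integers s ≥ 0 and t ≥ 0, setting p = 2s+1 and r = 2t, the following identity of rational numbers holds: ∏_{i=0}^{r−1} (3p+3i+1)! / ( (3p+2i+1)! (p+2i)! ) · ∏_{i=0}^{t−1} (2p+2i+1)! (2i)! = [ A(p+r) · S(2(p+r), p) ] / [ A(p) · S(2p, p) ], where A(n) = ∏_{k=0}^{n−1} (3k+1)!/(n+k)! and, for odd p, S(L,p) = ∏_{ℓ=1}^{(p+1)/2} ∏_{k=ℓ}^{2ℓ−2} (L²−4k²) / ∏_{ℓ=0}^{(p−3)/2} (L² − (2ℓ+1)²)^{(p−1)/2−ℓ}. -/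
open Finset

/-- The alternating sign matrix numbers A(n) = ∏_{k=0}^{n-1} (3k+1)!/(n+k)! (as a rational). -/
def ASM (n : ℕ) : ℚ :=
  ∏ k ∈ Finset.range n, ((3 * k + 1).factorial : ℚ) / ((n + k).factorial : ℚ)

/-- S(L, p) for even p = 2s:
S(L,p) = ∏_{ℓ=1}^{p/2} ∏_{k=ℓ}^{2ℓ−1} (L²−4k²) / ∏_{ℓ=0}^{p/2−1} (L²−(2ℓ+1)²)^(p/2−ℓ). -/
def SEven (L : ℕ) (s : ℕ) : ℚ :=
  (∏ l ∈ Finset.Icc 1 s, ∏ k ∈ Finset.Icc l (2 * l - 1),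
      ((L : ℚ) ^ 2 - 4 * (k : ℚ) ^ 2)) /
    ∏ l ∈ Finset.range s, ((L : ℚ) ^ 2 - (2 * (l : ℚ) + 1) ^ 2) ^ (s - l)

/-- S(L, p) for odd p = 2s+1:
S(L,p) = ∏_{ℓ=1}^{(p+1)/2} ∏_{k=ℓ}^{2ℓ−2} (L²−4k²) / ∏_{ℓ=0}^{(p−3)/2} (L²−(2ℓ+1)²)^((p−1)/2−ℓ). -/
def SOdd (L : ℕ) (s : ℕ) : ℚ :=
  (∏ l ∈ Finset.Icc 1 (s + 1), ∏ k ∈ Finset.Icc l (2 * l - 2),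
      ((L : ℚ) ^ 2 - 4 * (k : ℚ) ^ 2)) /
    ∏ l ∈ Finset.range s, ((L : ℚ) ^ 2 - (2 * (l : ℚ) + 1) ^ 2) ^ (s - l)

/-! Write `n = p + r`. Both sides are telescoped in `t`: raising `t` by one multiplies the left side
by its factors for `i = 2t, 2t + 1` and `i = t`, multiplies `A(n)` by the factorial quotient
`A(n + 2) / A(n)`, and multiplies `S(2n, p)` by a factorial quotient found by induction on `s`. That
induction rests on the step `S(L, p) ↦ S(L, p + 2)`, which contributes the factors `L² - 4k²` and
`L² - (2ℓ + 1)²`: at `L = 2n` these are products of runs of consecutive integers and of consecutive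
odd integers, hence factorial quotients. -/

open scoped Nat

lemma factorial_mul_prod_range {a k b : ℕ} (h : a + k = b) :
    (a ! : ℚ) * ∏ j ∈ range k, (a + 1 + j : ℚ) = (b ! : ℚ) := by
  rw [← h, ← Nat.factorial_mul_ascFactorial, Nat.ascFactorial_eq_prod_range]
  push_cast
  rfl

lemma factorial_mul_prod_range_odd (a k : ℕ) :
    ((2 * a)! : ℚ) * (a + k)! * 2 ^ k * ∏ j ∈ range k, (2 * a + 1 + 2 * j : ℚ) =
      (2 * a + 2 * k)! * a ! := by
  induction k with
  | zero => simp
  | succ k ih =>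
    rw [prod_range_succ, show 2 * a + 2 * (k + 1) = 2 * a + 2 * k + 1 + 1 by ring, ← add_assoc,
      Nat.factorial_succ (a + k), Nat.factorial_succ (2 * a + 2 * k + 1),
      Nat.factorial_succ (2 * a + 2 * k)]
    push_cast
    linear_combination (2 * ((a : ℚ) + k + 1) * (2 * a + 1 + 2 * k)) * ih

lemma SOdd_succ (L s : ℕ) : SOdd L (s + 1) = SOdd L s *
    ((∏ k ∈ Icc (s + 2) (2 * s + 2), ((L : ℚ) ^ 2 - 4 * (k : ℚ) ^ 2)) /
     ∏ l ∈ range (s + 1), ((L : ℚ) ^ 2 - (2 * (l : ℚ) + 1) ^ 2)) := by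
  have hnum :
      ∏ l ∈ Icc 1 (s + 2), ∏ k ∈ Icc l (2 * l - 2), ((L : ℚ) ^ 2 - 4 * (k : ℚ) ^ 2) =
        (∏ l ∈ Icc 1 (s + 1), ∏ k ∈ Icc l (2 * l - 2), ((L : ℚ) ^ 2 - 4 * (k : ℚ) ^ 2)) *
          ∏ k ∈ Icc (s + 2) (2 * s + 2), ((L : ℚ) ^ 2 - 4 * (k : ℚ) ^ 2) := by
    rw [prod_Icc_succ_top (by omega), show 2 * (s + 1 + 1) - 2 = 2 * s + 2 by omega]
  have hden : ∏ l ∈ range (s + 1), ((L : ℚ) ^ 2 - (2 * (l : ℚ) + 1) ^ 2) ^ (s + 1 - l)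
      = (∏ l ∈ range s, ((L : ℚ) ^ 2 - (2 * (l : ℚ) + 1) ^ 2) ^ (s - l)) *
        ∏ l ∈ range (s + 1), ((L : ℚ) ^ 2 - (2 * (l : ℚ) + 1) ^ 2) := by
    calc _ = ∏ l ∈ range (s + 1), (((L : ℚ) ^ 2 - (2 * (l : ℚ) + 1) ^ 2) ^ (s - l) *
          ((L : ℚ) ^ 2 - (2 * (l : ℚ) + 1) ^ 2)) :=
          prod_congr rfl fun l hl => by
            rw [show s + 1 - l = s - l + 1 by simp at hl; omega, pow_succ]
      _ = _ := by
        rw [prod_mul_distrib,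
          prod_range_succ (fun l => ((L : ℚ) ^ 2 - (2 * (l : ℚ) + 1) ^ 2) ^ (s - l)),
          Nat.sub_self, pow_zero, mul_one]
  rw [SOdd, SOdd, hnum, hden, div_mul_div_comm]

lemma prod_Icc_sq_sub_four_mul_sq (m s : ℕ) :
    ∏ k ∈ Icc (s + 2) (2 * s + 2),
        (((2 * (m + 2 * s + 3) : ℕ) : ℚ) ^ 2 - 4 * (k : ℚ) ^ 2) =
      (4 : ℚ) ^ (s + 1) * (m + s + 1)! * (m + 4 * s + 5)! / (m ! * (m + 3 * s + 4)!) := by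
  rw [eq_div_iff (by positivity), mul_comm, ← Ico_add_one_right_eq_Icc, prod_Ico_eq_prod_range,
    show 2 * s + 2 + 1 - (s + 2) = s + 1 by omega]
  have hfactor : ∀ j ∈ range (s + 1),
      (((2 * (m + 2 * s + 3) : ℕ) : ℚ) ^ 2 - 4 * ((s + 2 + j : ℕ) : ℚ) ^ 2) =
        4 * (m + 1 + (s - j : ℕ)) * ((m + 3 * s + 4 : ℕ) + 1 + j) := by
    intro j hj
    rw [Nat.cast_sub (by simp at hj; omega)]
    push_cast
    ring
  have hreflect : ∏ j ∈ range (s + 1), (m + 1 + (s - j : ℕ) : ℚ) =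
      ∏ j ∈ range (s + 1), (m + 1 + j : ℚ) := by
    rw [← prod_range_reflect (fun j => (m + 1 + j : ℚ))]
    refine prod_congr rfl fun j hj => ?_
    rw [show s + 1 - 1 - j = s - j by omega]
  rw [prod_congr rfl hfactor, prod_mul_distrib, prod_mul_distrib, prod_const, card_range, hreflect,
    ← factorial_mul_prod_range (show m + (s + 1) = m + s + 1 by ring),
    ← factorial_mul_prod_range (show m + 3 * s + 4 + (s + 1) = m + 4 * s + 5 by ring)]
  ring

lemma prod_range_sq_sub_odd_sq (m s : ℕ) :
    ∏ l ∈ range (s + 1), (((2 * (m + 2 * s + 3) : ℕ) : ℚ) ^ 2 - (2 * (l : ℚ) + 1) ^ 2) =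
      ((2 * m + 6 * s + 8)! * (m + s + 2)! : ℚ) /
        (4 ^ (s + 1) * (2 * m + 2 * s + 4)! * (m + 3 * s + 4)!) := by
  rw [eq_div_iff (by positivity), mul_comm]
  have hfactor : ∀ l ∈ range (s + 1),
      (((2 * (m + 2 * s + 3) : ℕ) : ℚ) ^ 2 - (2 * (l : ℚ) + 1) ^ 2) =
        (2 * (m + s + 2) + 1 + 2 * (s - l : ℕ)) * (2 * (m + s + 2) + 1 + 2 * (s + 1 + l)) := by
    intro l hl
    rw [Nat.cast_sub (by simp at hl; omega)]
    push_cast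
    ring
  have hreflect : ∏ l ∈ range (s + 1), (2 * (m + s + 2) + 1 + 2 * (s - l : ℕ) : ℚ) =
      ∏ l ∈ range (s + 1), (2 * (m + s + 2) + 1 + 2 * l : ℚ) := by
    rw [← prod_range_reflect (fun l => (2 * (m + s + 2) + 1 + 2 * l : ℚ))]
    refine prod_congr rfl fun l hl => ?_
    rw [show s + 1 - 1 - l = s - l by omega]
  have hodd := factorial_mul_prod_range_odd (m + s + 2) (s + 1 + (s + 1))
  rw [prod_range_add, pow_add, ← mul_pow] at hodd
  push_cast at hodd
  norm_num at hodd
  rw [prod_congr rfl hfactor, prod_mul_distrib, hreflect,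
    show 2 * m + 2 * s + 4 = 2 * (m + s + 2) by ring,
    show m + 3 * s + 4 = m + s + 2 + (s + 1 + (s + 1)) by ring,
    show 2 * m + 6 * s + 8 = 2 * (m + s + 2) + 2 * (s + 1 + (s + 1)) by ring, ← hodd]
  ring

lemma SOdd_succ_factorial (m s : ℕ) :
    SOdd (2 * (m + 2 * s + 3)) (s + 1) = SOdd (2 * (m + 2 * s + 3)) s *
      (2 * 16 ^ (s + 1) * (m + 4 * s + 5)! * (2 * m + 2 * s + 3)! /
        (m ! * (2 * m + 6 * s + 8)!)) := by
  rw [SOdd_succ, prod_Icc_sq_sub_four_mul_sq, prod_range_sq_sub_odd_sq,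
    Nat.factorial_succ (m + s + 1), Nat.factorial_succ (2 * m + 2 * s + 3)]
  congr 1
  rw [show (16 : ℚ) = 4 * 4 by norm_num, mul_pow]
  push_cast
  field_simp
  ring

lemma SOdd_two_mul_add_two (s m : ℕ) :
    SOdd (2 * (2 * s + 1 + m + 2)) s = SOdd (2 * (2 * s + 1 + m)) s *
      ((m + 4 * s + 3)! * m ! * (2 * m + 4 * s + 2)! * (2 * m + 4 * s + 3)! * (2 * m + 4 * s + 4)! *
          (2 * m + 4 * s + 5)! /
        ((m + 2 * s + 1)! * (m + 2 * s + 2)! * (2 * m + 6 * s + 4)! * (2 * m + 2 * s + 1)! *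
          (2 * m + 6 * s + 6)! * (2 * m + 2 * s + 3)!)) := by
  induction s generalizing m with
  | zero =>
    simp [SOdd, Nat.factorial_succ]
    field_simp
    ring
  | succ s ih =>
    have ih' := ih (m + 2)
    rw [show 2 * (2 * s + 1 + (m + 2) + 2) = 2 * (m + 2 + 2 * s + 3) by ring,
      show 2 * (2 * s + 1 + (m + 2)) = 2 * (m + 2 * s + 3) by ring] at ih'
    rw [show 2 * (2 * (s + 1) + 1 + m + 2) = 2 * (m + 2 + 2 * s + 3) by ring,
      show 2 * (2 * (s + 1) + 1 + m) = 2 * (m + 2 * s + 3) by ring,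
      SOdd_succ_factorial, SOdd_succ_factorial, ih']
    -- once their arguments are normalised, all factorials cancel
    field_simp
    ring_nf

lemma SOdd_pos (s m : ℕ) : 0 < SOdd (2 * (2 * s + 1 + m)) s := by
  induction s generalizing m with
  | zero => simp [SOdd]
  | succ s ih =>
    have h := ih (m + 2)
    rw [show 2 * (2 * s + 1 + (m + 2)) = 2 * (m + 2 * s + 3) by ring] at h
    rw [show 2 * (2 * (s + 1) + 1 + m) = 2 * (m + 2 * s + 3) by ring, SOdd_succ_factorial]
    positivity

lemma ASM_pos (n : ℕ) : 0 < ASM n := by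
  unfold ASM
  positivity

lemma ASM_succ (n : ℕ) :
    ASM (n + 1) = ASM n * ((3 * n + 1)! * n ! / ((2 * n)! * (2 * n + 1)!)) := by
  have hden : ∏ k ∈ range (n + 1), ((n + 1 + k)! : ℚ) =
      (∏ k ∈ range n, ((n + k)! : ℚ)) * (2 * n)! * (2 * n + 1)! / n ! := by
    rw [eq_div_iff (by positivity)]
    calc _ = ∏ k ∈ range (n + 1 + 1), ((n + k)! : ℚ) := by
          rw [prod_range_succ' _ (n + 1)]
          exact congrArg₂ _ (prod_congr rfl fun k _ => by rw [add_right_comm]; rfl) rfl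
      _ = _ := by rw [prod_range_succ, prod_range_succ, ← two_mul, ← add_assoc, ← two_mul]
  rw [ASM, ASM, prod_div_distrib, prod_div_distrib, prod_range_succ _ n, hden]
  field_simp

lemma ASM_mul_SOdd_succ (s t : ℕ) :
    ASM (2 * s + 1 + 2 * (t + 1)) * SOdd (2 * (2 * s + 1 + 2 * (t + 1))) s =
      ASM (2 * s + 1 + 2 * t) * SOdd (2 * (2 * s + 1 + 2 * t)) s *
        ((3 * (2 * s + 1) + 3 * (2 * t) + 1)! /
            ((3 * (2 * s + 1) + 2 * (2 * t) + 1)! * (2 * s + 1 + 2 * (2 * t))!) *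
          ((3 * (2 * s + 1) + 3 * (2 * t + 1) + 1)! /
            ((3 * (2 * s + 1) + 2 * (2 * t + 1) + 1)! * (2 * s + 1 + 2 * (2 * t + 1))!)) *
          ((2 * (2 * s + 1) + 2 * t + 1)! * (2 * t)!)) := by
  rw [show 2 * s + 1 + 2 * (t + 1) = 2 * s + 1 + 2 * t + 1 + 1 by ring, ASM_succ, ASM_succ,
    show 2 * s + 1 + 2 * t + 1 + 1 = 2 * s + 1 + 2 * t + 2 by ring, SOdd_two_mul_add_two]
  field_simp
  ring_nf

/-- p odd, r even: Krattenthaler's formula for 𝓖_{p,r} equals the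
Mitra–Nienhuis–de Gier–Batchelor expression A(p+r)·S(2(p+r),p) / (A(p)·S(2p,p)),
with p = 2s+1 and r = 2t. -/
theorem stmt9 (s t : ℕ) :
    (∏ i ∈ Finset.range (2 * t),
        ((3 * (2 * s + 1) + 3 * i + 1).factorial : ℚ) /
          (((3 * (2 * s + 1) + 2 * i + 1).factorial : ℚ) *
            ((2 * s + 1 + 2 * i).factorial : ℚ))) *
      ∏ i ∈ Finset.range t,
        (((2 * (2 * s + 1) + 2 * i + 1).factorial : ℚ) * ((2 * i).factorial : ℚ)) =
    ASM (2 * s + 1 + 2 * t) * SOdd (2 * (2 * s + 1 + 2 * t)) s /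
      (ASM (2 * s + 1) * SOdd (2 * (2 * s + 1)) s) := by
  have hp : 0 < SOdd (2 * (2 * s + 1)) s := SOdd_pos s 0
  rw [eq_div_iff (mul_pos (ASM_pos _) hp).ne']
  induction t with
  | zero => simp
  | succ t ih =>
    rw [ASM_mul_SOdd_succ, ← ih, mul_add_one 2 t, prod_range_succ, prod_range_succ,
      prod_range_succ]
    ring
end

section
/- Let R be a commutative ring, let τ ∈ R, and let r ≥ 1, p ≥ 0 be integers. For q ≥ 0 set P_q = ∏_{m=1}^r (1+τu_m)^q · ∏_{1≤l<m≤r} (u_m − u_l)(1 + τu_m + u_l u_m) ∈ R[u_1,…,u_r]. Then Σ_a τ^{e(a)} · [coefficient of ∏_{i=1}^r u_i^{a_i−1} in P_p] = [coefficient of ∏_{i=1}^r u_i^{2i−2} in P_{p+1}], where the sum runs over all tuples a = (a_1,…,a_r) with a_1 = 1 and a_i ∈ {2i−2, 2i−1} for 2 ≤ i ≤ r, and e(a) denotes the number of indices i with a_i even. -/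
open Finset

/-- The polynomial P_q = ∏ₘ (1+τuₘ)^q · ∏_{l<m} (uₘ−u_l)(1+τuₘ+u_luₘ). -/
noncomputable def Ppoly (R : Type*) [CommRing R] (τ : R) (r q : ℕ) :
    MvPolynomial (Fin r) R :=
  (∏ m : Fin r, (1 + MvPolynomial.C τ * MvPolynomial.X m) ^ q) *
    ∏ m : Fin r, ∏ l ∈ Finset.Iio m,
      ((MvPolynomial.X m - MvPolynomial.X l) *
        (1 + MvPolynomial.C τ * MvPolynomial.X m +
          MvPolynomial.X l * MvPolynomial.X m))

/-!
Since `P_{p+1} = ∏ₘ (1 + τuₘ) · P_p`, expanding `∏ₘ (1 + τuₘ) = ∑_{t ⊆ [r]} τ^|t| u^t` gives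
`[u^d] P_{p+1} = ∑_{t ⊆ [r], u^t ∣ u^d} τ^|t| [u^{d - 1_t}] P_p`. For the staircase exponent
`dᵢ = 2i − 2` the admissible `t` are the subsets avoiding the first index, and `t ↦ a` with
`aᵢ = 2i − 2` for `i ∈ t` and `aᵢ = 2i − 1` otherwise is a bijection onto the tuples of the sum
rule, under which `t` is the set of even entries of `a` and `d − 1_t = a − 1`.
-/

namespace MvPolynomial

variable {R σ : Type*} [CommRing R]

theorem prod_C_mul_X (τ : R) (t : Finset σ) :
    ∏ i ∈ t, (C τ * X i) = monomial (∑ i ∈ t, Finsupp.single i 1) (τ ^ t.card) := by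
  simp_rw [← prod_const, monomial_sum_prod, C_mul_X_eq_monomial]

theorem prod_one_add_C_mul_X (τ : R) (s : Finset σ) :
    ∏ m ∈ s, (1 + C τ * X m) =
      ∑ t ∈ s.powerset, monomial (∑ i ∈ t, Finsupp.single i 1) (τ ^ t.card) := by
  simp_rw [prod_one_add, prod_C_mul_X]

theorem coeff_prod_one_add_C_mul_X_mul [DecidableEq σ] (τ : R) (s : Finset σ)
    (Q : MvPolynomial σ R) (d : σ →₀ ℕ) :
    coeff d ((∏ m ∈ s, (1 + C τ * X m)) * Q) =
      ∑ t ∈ s.powerset with ∑ i ∈ t, Finsupp.single i 1 ≤ d,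
        τ ^ t.card * coeff (d - ∑ i ∈ t, Finsupp.single i 1) Q := by
  rw [prod_one_add_C_mul_X, sum_mul, coeff_sum, sum_filter]
  simp_rw [coeff_monomial_mul']

end MvPolynomial

open MvPolynomial

theorem Ppoly_succ {R : Type*} [CommRing R] (τ : R) (r p : ℕ) :
    Ppoly R τ r (p + 1) = (∏ m : Fin r, (1 + C τ * X m)) * Ppoly R τ r p := by
  simp only [Ppoly, pow_succ, prod_mul_distrib]
  ring

theorem Finsupp.sum_single_one_apply {σ : Type*} [DecidableEq σ] (t : Finset σ) (j : σ) :
    (∑ i ∈ t, Finsupp.single i 1) j = if j ∈ t then 1 else 0 := by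
  simp [Finsupp.finsetSum_apply, Finsupp.single_apply]

namespace SumRule

variable {r : ℕ}

def stairTuple (t : Finset (Fin r)) (k : Fin r) : Fin (2 * r) :=
  if k ∈ t then ⟨2 * k.1, by omega⟩ else ⟨2 * k.1 + 1, by omega⟩

def evenIndices (a : Fin r → Fin (2 * r)) : Finset (Fin r) :=
  univ.filter fun i => Even (a i).1

theorem evenIndices_stairTuple (t : Finset (Fin r)) : evenIndices (stairTuple t) = t := by
  ext k
  simp only [evenIndices, mem_filter, mem_univ, true_and]
  by_cases hk : k ∈ t <;> simp [stairTuple, hk, Nat.not_even_bit1]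

theorem stairTuple_evenIndices (hr : 1 ≤ r) {a : Fin r → Fin (2 * r)}
    (h₀ : (a ⟨0, hr⟩).1 = 1)
    (h : ∀ i : Fin r, 0 < i.1 → (a i).1 = 2 * i.1 ∨ (a i).1 = 2 * i.1 + 1) :
    stairTuple (evenIndices a) = a := by
  funext k
  apply Fin.ext
  rcases Nat.eq_zero_or_pos k.1 with hk | hk
  · obtain rfl : k = ⟨0, hr⟩ := Fin.ext hk
    simp [stairTuple, evenIndices, h₀]
  · rcases h k hk with hak | hak <;>
      simp [stairTuple, evenIndices, hak, Nat.not_even_bit1]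

theorem sum_single_one_le_two_mul_iff (t : Finset (Fin r)) :
    ∑ i ∈ t, Finsupp.single i 1 ≤ Finsupp.equivFunOnFinite.symm (fun i : Fin r => 2 * i.1) ↔
      ∀ i ∈ t, 0 < i.1 := by
  simp only [Finsupp.le_def, Finsupp.sum_single_one_apply, Finsupp.equivFunOnFinite_symm_apply_apply]
  refine ⟨fun h i hi => ?_, fun h i => ?_⟩
  · have := h i
    simp only [hi, if_true] at this
    omega
  · split_ifs with hi
    · have := h i hi; omega
    · exact Nat.zero_le _

theorem stairTuple_sub_one (t : Finset (Fin r)) :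
    Finsupp.equivFunOnFinite.symm (fun i => (stairTuple t i).1 - 1) =
      Finsupp.equivFunOnFinite.symm (fun i : Fin r => 2 * i.1) - ∑ i ∈ t, Finsupp.single i 1 := by
  ext k
  rw [Finsupp.tsub_apply, Finsupp.sum_single_one_apply]
  by_cases hk : k ∈ t <;> simp [stairTuple, hk]

theorem pos_of_mem_evenIndices (hr : 1 ≤ r) {a : Fin r → Fin (2 * r)}
    (h₀ : (a ⟨0, hr⟩).1 = 1) : ∀ i ∈ evenIndices a, 0 < i.1 := by
  intro i hi
  refine Nat.pos_of_ne_zero fun hi₀ => ?_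
  obtain rfl : i = ⟨0, hr⟩ := Fin.ext hi₀
  simp [evenIndices, h₀] at hi

theorem stairTuple_zero (hr : 1 ≤ r) {t : Finset (Fin r)} (ht : ∀ i ∈ t, 0 < i.1) :
    (stairTuple t ⟨0, hr⟩).1 = 1 := by
  have h₀ : (⟨0, hr⟩ : Fin r) ∉ t := fun h => (ht _ h).false
  simp [stairTuple, h₀]

theorem stairTuple_val (t : Finset (Fin r)) (i : Fin r) :
    (stairTuple t i).1 = 2 * i.1 ∨ (stairTuple t i).1 = 2 * i.1 + 1 := by
  unfold stairTuple
  split_ifs <;> simp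

end SumRule

open SumRule in
/-- Tuples are maps `a : Fin r → Fin (2*r)`, with `i : Fin r` standing for the 1-based index
`i.1 + 1` (so 2i−2 is `2*i.1` and 2i−1 is `2*i.1+1`). -/
theorem stmt12 (R : Type*) [CommRing R] (τ : R) (r p : ℕ) (hr : 1 ≤ r) :
    ∑ a ∈ Finset.univ.filter (fun a : Fin r → Fin (2 * r) =>
        (a ⟨0, hr⟩).1 = 1 ∧
          ∀ i : Fin r, 0 < i.1 → ((a i).1 = 2 * i.1 ∨ (a i).1 = 2 * i.1 + 1)),
      τ ^ (Finset.univ.filter (fun i : Fin r => Even (a i).1)).card *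
        MvPolynomial.coeff
          (Finsupp.equivFunOnFinite.symm fun i : Fin r => (a i).1 - 1)
          (Ppoly R τ r p) =
    MvPolynomial.coeff (Finsupp.equivFunOnFinite.symm fun i : Fin r => 2 * i.1)
      (Ppoly R τ r (p + 1)) := by
  classical
  rw [Ppoly_succ, coeff_prod_one_add_C_mul_X_mul]
  refine sum_nbij' evenIndices stairTuple ?_ ?_ ?_ ?_ ?_
  · intro a ha
    obtain ⟨-, h₀, -⟩ := mem_filter.1 ha
    simpa [sum_single_one_le_two_mul_iff] using pos_of_mem_evenIndices hr h₀
  · intro t ht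
    replace ht := (sum_single_one_le_two_mul_iff t).1 (mem_filter.1 ht).2
    simpa using ⟨stairTuple_zero hr ht, fun i _ => stairTuple_val t i⟩
  · intro a ha
    obtain ⟨-, h₀, h⟩ := mem_filter.1 ha
    exact stairTuple_evenIndices hr h₀ h
  · intro t _
    exact evenIndices_stairTuple t
  · intro a ha
    obtain ⟨-, h₀, h⟩ := mem_filter.1 ha
    rw [← stairTuple_sub_one, stairTuple_evenIndices hr h₀ h]
    rfl
end
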